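/- Let p be a prime, P a finite p-group, and M a nonzero F_p P-module on which P acts uniserially, of length ℓ. For v = (v_1,…,v_n) ∈ M^n, let N_v be the cyclic F_p P-submodule of M^n generated by v. Then the following are equivalent: (1) N_v is a uniserial F_p P-module of length ℓ; (2) dim_{F_p} N_v = ℓ and dim_{F_p} C_{N_v}(P) = 1; (3) there exists i ∈ {1,…,n} such that (a) every a ∈ F_p P with a·v_i = 0 satisfies a·v = 0, and (b) v_i lies outside [P,M]. -/

import Mathlib

/-!
The uniserial hypothesis says `dim [P, N] = dim N - 1` for every nonzero submodule `N` of `M`.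
Hence `[P, -]` is nilpotent on `M`, and so coordinatewise on `M^n`; every nonzero submodule of
`M^n` therefore has nonzero fixed points, and by Nakayama's lemma `[P, M]` is the unique maximal
submodule of `M`, so `F_p P · x = M` exactly when `x ∉ [P, M]`.

Condition (3) says that the `i`-th projection embeds `N_v` into `M` with image `F_p P · v_i = M`.
Submodules of `M` satisfy the uniserial condition, hence so do those of `N_v`, which is (1).
In (1) the fixed points `C_{N_v}(P)` form a nonzero submodule killed by `[P, -]`, so they have
index `p`, i.e. dimension one: this is (2). Conversely, if `C_{N_v}(P)` is a line, pick a
coordinate `i` on which it is nonzero; the kernel of the `i`-th projection on `N_v` has no nonzero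
fixed points, so it vanishes, and `dim N_v = ℓ` forces `F_p P · v_i = M`.
-/

variable (p : ℕ) (P : Type) [Group P]
variable (M : Type) [AddCommGroup M] [Module (ZMod p) M]
  [Module (MonoidAlgebra (ZMod p) P) M]
  [IsScalarTower (ZMod p) (MonoidAlgebra (ZMod p) P) M]

/-- The fixed-point subspace `C_M(P)` of an `F_p P`-module `M`. -/
def fixedPts : Submodule (ZMod p) M where
  carrier := {m | ∀ g : P, MonoidAlgebra.of (ZMod p) P g • m = m}
  add_mem' := by
    intro a b ha hb g
    rw [smul_add, ha g, hb g]
  zero_mem' := by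
    intro g
    rw [smul_zero]
  smul_mem' := by
    intro c m hm g
    rw [← algebraMap_smul (MonoidAlgebra (ZMod p) P) c m, ← mul_smul, ← Algebra.commutes,
      mul_smul, hm g, algebraMap_smul]

/-- The submodule `[P, N]` of an `F_p P`-module `M` spanned by the elements
`g • m - m` with `g ∈ P`, `m ∈ N`. -/
noncomputable def bracketSub (N : Submodule (MonoidAlgebra (ZMod p) P) M) :
    Submodule (MonoidAlgebra (ZMod p) P) M :=
  Submodule.span (MonoidAlgebra (ZMod p) P)
    {x | ∃ g : P, ∃ m ∈ N, x = MonoidAlgebra.of (ZMod p) P g • m - m}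

/-- An `F_p P`-module `M` is uniserial if `[P, N]` has (additive) index `p` in `N`
for every nonzero submodule `N` of `M`. -/
def UniserialFpP : Prop :=
  ∀ N : Submodule (MonoidAlgebra (ZMod p) P) M, N ≠ ⊥ →
    (bracketSub p P M N).toAddSubgroup.relIndex N.toAddSubgroup = p

open Module Submodule

section Bracket

variable {p P}
variable {V W : Type} [AddCommGroup V] [Module (MonoidAlgebra (ZMod p) P) V]
  [AddCommGroup W] [Module (MonoidAlgebra (ZMod p) P) W]

local notation "R" => MonoidAlgebra (ZMod p) P

theorem bracketSub_le (N : Submodule R V) : bracketSub p P V N ≤ N := by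
  rw [bracketSub, span_le]
  rintro _ ⟨g, m, hm, rfl⟩
  exact sub_mem (N.smul_mem _ hm) hm

theorem bracketSub_mono : Monotone (bracketSub p P V) := by
  intro N N' h
  apply span_mono
  rintro _ ⟨g, m, hm, rfl⟩
  exact ⟨g, m, h hm, rfl⟩

theorem bracketSub_sup_le (N N' : Submodule R V) :
    bracketSub p P V (N ⊔ N') ≤ N ⊔ bracketSub p P V N' := by
  rw [bracketSub, span_le]
  rintro _ ⟨g, m, hm, rfl⟩
  obtain ⟨a, ha, b, hb, rfl⟩ := mem_sup.mp hm
  rw [smul_add, add_sub_add_comm]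
  exact add_mem (mem_sup_left (sub_mem (N.smul_mem _ ha) ha))
    (mem_sup_right (subset_span ⟨g, b, hb, rfl⟩))

theorem map_bracketSub (f : V →ₗ[R] W) (N : Submodule R V) :
    (bracketSub p P V N).map f = bracketSub p P W (N.map f) := by
  rw [bracketSub, bracketSub, map_span]
  congr 1
  ext x
  constructor
  · rintro ⟨_, ⟨g, m, hm, rfl⟩, rfl⟩
    exact ⟨g, f m, ⟨m, hm, rfl⟩, by rw [map_sub, map_smul]⟩
  · rintro ⟨g, _, ⟨m, hm, rfl⟩, rfl⟩
    exact ⟨_, ⟨g, m, hm, rfl⟩, by rw [map_sub, map_smul]⟩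

theorem map_iterate_bracketSub (f : V →ₗ[R] W) (k : ℕ) (N : Submodule R V) :
    ((bracketSub p P V)^[k] N).map f = (bracketSub p P W)^[k] (N.map f) :=
  Function.Semiconj.iterate_right (f := map f) (map_bracketSub f) k N

/-- Nakayama's lemma for the operator `N ↦ [P, N]`. -/
theorem le_of_le_sup_bracketSub {X N : Submodule R V} {k : ℕ}
    (hk : (bracketSub p P V)^[k] X = ⊥) (h : X ≤ N ⊔ bracketSub p P V X) : X ≤ N := by
  suffices ∀ j, X ≤ N ⊔ (bracketSub p P V)^[j] X by simpa [hk] using this k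
  intro j
  induction j with
  | zero => exact le_sup_right
  | succ j ih =>
    calc X ≤ N ⊔ bracketSub p P V X := h
      _ ≤ N ⊔ bracketSub p P V (N ⊔ (bracketSub p P V)^[j] X) :=
        sup_le_sup_left (bracketSub_mono ih) _
      _ ≤ N ⊔ (bracketSub p P V)^[j + 1] X := by
        rw [Function.iterate_succ_apply']
        exact sup_le le_sup_left (bracketSub_sup_le _ _)

theorem disjoint_span_ker_proj_iff {ι : Type} {v : ι → V} {i : ι} :
    Disjoint (span R {v}) (LinearMap.ker (LinearMap.proj i : (ι → V) →ₗ[R] V)) ↔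
      ∀ a : R, a • v i = 0 → a • v = 0 := by
  simp only [LinearMap.disjoint_ker, mem_span_singleton, LinearMap.proj_apply,
    forall_exists_index, forall_apply_eq_imp_iff, Pi.smul_apply]

theorem map_proj_span_singleton {ι : Type} (v : ι → V) (i : ι) :
    (span R {v}).map (LinearMap.proj i : (ι → V) →ₗ[R] V) = span R {v i} := by
  rw [map_span, Set.image_singleton]
  rfl

variable [Module (ZMod p) V] [Module (ZMod p) W]

def fixedSubmodule : Submodule R V where
  toAddSubmonoid := (fixedPts p P V).toAddSubmonoid
  smul_mem' a x hx := by
    induction a using MonoidAlgebra.induction_on with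
    | of g => rwa [show MonoidAlgebra.of (ZMod p) P g • x = x from hx g]
    | add a b ha hb => rw [add_smul]; exact (fixedPts p P V).add_mem ha hb
    | smul c a ha => rw [smul_assoc]; exact (fixedPts p P V).smul_mem c ha

theorem bracketSub_eq_bot_iff (N : Submodule R V) :
    bracketSub p P V N = ⊥ ↔ N ≤ fixedSubmodule := by
  rw [bracketSub, span_eq_bot]
  constructor
  · intro h m hm g
    exact sub_eq_zero.mp (h _ ⟨g, m, hm, rfl⟩)
  · rintro h _ ⟨g, m, hm, rfl⟩
    rw [show MonoidAlgebra.of (ZMod p) P g • m = m from h hm g, sub_self]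

theorem fixedSubmodule_inf_ne_bot {K : Submodule R V} (hK : K ≠ ⊥) {k : ℕ}
    (hk : (bracketSub p P V)^[k] K = ⊥) : fixedSubmodule ⊓ K ≠ ⊥ := by
  induction k generalizing K with
  | zero => exact absurd hk hK
  | succ k ih =>
    by_cases hB : bracketSub p P V K = ⊥
    · rwa [inf_eq_right.mpr ((bracketSub_eq_bot_iff K).mp hB)]
    · exact ne_bot_of_le_ne_bot (ih hB hk) (inf_le_inf_left _ (bracketSub_le K))

theorem finrank_map_eq_of_disjoint_ker (f : V →ₗ[R] W) {N : Submodule R V}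
    (h : Disjoint N (LinearMap.ker f)) : finrank (ZMod p) (N.map f) = finrank (ZMod p) N := by
  have hinj : Function.Injective (f.domRestrict N) := fun x y hxy =>
    Subtype.ext <| sub_eq_zero.mp <| LinearMap.disjoint_ker.mp h _ (sub_mem x.2 y.2) <| by
      rw [map_sub, sub_eq_zero]; exact hxy
  rw [← LinearMap.range_domRestrict]
  exact ((LinearEquiv.ofInjective _ hinj).restrictScalars (ZMod p)).finrank_eq.symm

theorem finrank_zmod_top : finrank (ZMod p) (⊤ : Submodule R V) = finrank (ZMod p) V := by
  change finrank (ZMod p) ((⊤ : Submodule R V).restrictScalars (ZMod p)) = _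
  rw [restrictScalars_top, finrank_top]

variable [Fact p.Prime] [Module.Finite (ZMod p) V]

theorem natCard_eq_prime_pow_finrank (A : Submodule R V) :
    Nat.card A = p ^ finrank (ZMod p) A := by
  change Nat.card (A.restrictScalars (ZMod p)) = p ^ finrank (ZMod p) (A.restrictScalars (ZMod p))
  rw [natCard_eq_pow_finrank (K := ZMod p), Nat.card_zmod]

theorem finrank_zmod_eq_zero_iff {N : Submodule R V} : finrank (ZMod p) N = 0 ↔ N = ⊥ := by
  change finrank (ZMod p) (N.restrictScalars (ZMod p)) = 0 ↔ _
  rw [Submodule.finrank_eq_zero, restrictScalars_eq_bot_iff]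

theorem finrank_zmod_lt_finrank_of_lt {A B : Submodule R V} (h : A < B) :
    finrank (ZMod p) A < finrank (ZMod p) B :=
  Submodule.finrank_lt_finrank_of_lt
    (s := A.restrictScalars (ZMod p)) (t := B.restrictScalars (ZMod p)) h

theorem eq_of_le_of_finrank_zmod_le {A B : Submodule R V} (h : A ≤ B)
    (h' : finrank (ZMod p) B ≤ finrank (ZMod p) A) : A = B :=
  restrictScalars_injective (ZMod p) R V (Submodule.eq_of_le_of_finrank_le h h')

theorem finrank_zmod_eq_iff_eq_top {N : Submodule R V} :
    finrank (ZMod p) N = finrank (ZMod p) V ↔ N = ⊤ := by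
  refine ⟨fun h => eq_of_le_of_finrank_zmod_le le_top ?_, fun h => h ▸ finrank_zmod_top⟩
  rw [finrank_zmod_top, h]

theorem relIndex_eq_prime_iff {A B : Submodule R V} (hAB : A ≤ B) :
    A.toAddSubgroup.relIndex B.toAddSubgroup = p ↔
      finrank (ZMod p) A + 1 = finrank (ZMod p) B := by
  have hcard := AddSubgroup.relIndex_mul_relIndex ⊥ A.toAddSubgroup B.toAddSubgroup bot_le hAB
  rw [AddSubgroup.relIndex_bot_left, AddSubgroup.relIndex_bot_left] at hcard
  change Nat.card A * _ = Nat.card B at hcard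
  rw [natCard_eq_prime_pow_finrank, natCard_eq_prime_pow_finrank] at hcard
  have hp : p.Prime := Fact.out
  constructor
  · intro h
    rw [h, ← pow_succ] at hcard
    exact Nat.pow_right_injective hp.two_le hcard
  · intro h
    rw [← h, pow_succ] at hcard
    exact Nat.eq_of_mul_eq_mul_left (pow_pos hp.pos _) hcard

def IsUniserialBelow (W : Submodule R V) : Prop :=
  ∀ N : Submodule R V, N ≠ ⊥ → N ≤ W →
    (bracketSub p P V N).toAddSubgroup.relIndex N.toAddSubgroup = p

theorem finrank_fixedSubmodule_inf_eq_one {W : Submodule R V} (hW : W ≠ ⊥) {k : ℕ}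
    (hk : (bracketSub p P V)^[k] W = ⊥) (huni : IsUniserialBelow W) :
    finrank (ZMod p) ↥(fixedSubmodule ⊓ W) = 1 := by
  have hS : fixedSubmodule ⊓ W ≠ ⊥ := fixedSubmodule_inf_ne_bot hW hk
  have hBS : bracketSub p P V (fixedSubmodule ⊓ W) = ⊥ :=
    (bracketSub_eq_bot_iff _).mpr inf_le_left
  have h := (relIndex_eq_prime_iff (bracketSub_le _)).mp (huni _ hS inf_le_right)
  rwa [hBS, finrank_zmod_eq_zero_iff.mpr rfl, zero_add, eq_comm] at h

end Bracket

namespace UniserialFpP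

variable {p P M} [Fact p.Prime] [Module.Finite (ZMod p) M] (huni : UniserialFpP p P M)
include huni
omit [IsScalarTower (ZMod p) (MonoidAlgebra (ZMod p) P) M]

local notation "R" => MonoidAlgebra (ZMod p) P

theorem finrank_bracketSub_add_one {N : Submodule R M} (hN : N ≠ ⊥) :
    finrank (ZMod p) (bracketSub p P M N) + 1 = finrank (ZMod p) N :=
  (relIndex_eq_prime_iff (bracketSub_le N)).mp (huni N hN)

theorem iterate_bracketSub_finrank_eq_bot (N : Submodule R M) :
    (bracketSub p P M)^[finrank (ZMod p) N] N = ⊥ := by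
  induction hd : finrank (ZMod p) N generalizing N with
  | zero => exact finrank_zmod_eq_zero_iff.mp hd
  | succ d ih =>
    have hN : N ≠ ⊥ := fun h => by rw [← finrank_zmod_eq_zero_iff] at h; omega
    rw [Function.iterate_succ_apply]
    exact ih _ (by have := huni.finrank_bracketSub_add_one hN; omega)

theorem iterate_bracketSub_top_eq_bot :
    (bracketSub p P M)^[finrank (ZMod p) M] ⊤ = ⊥ := by
  simpa only [finrank_zmod_top] using huni.iterate_bracketSub_finrank_eq_bot ⊤

theorem iterate_bracketSub_pi_eq_bot {ι : Type} (K : Submodule R (ι → M)) :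
    (bracketSub p P (ι → M))^[finrank (ZMod p) M] K = ⊥ := by
  refine eq_bot_iff.mpr fun x hx => funext fun i => ?_
  have hxi : x i ∈ ((bracketSub p P (ι → M))^[finrank (ZMod p) M] K).map (LinearMap.proj i) :=
    ⟨x, hx, rfl⟩
  rw [map_iterate_bracketSub] at hxi
  have hle := bracketSub_mono.iterate (finrank (ZMod p) M)
    (le_top : K.map (LinearMap.proj i) ≤ ⊤)
  rw [huni.iterate_bracketSub_top_eq_bot] at hle
  exact hle hxi

theorem isUniserialBelow_of_disjoint_ker {V : Type} [AddCommGroup V] [Module R V]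
    [Module (ZMod p) V] [Module.Finite (ZMod p) V] (f : V →ₗ[R] M) {W : Submodule R V}
    (hW : Disjoint W (LinearMap.ker f)) : IsUniserialBelow W := by
  intro N hN hNW
  have hdisj : Disjoint N (LinearMap.ker f) := hW.mono_left hNW
  have hfN : N.map f ≠ ⊥ := by
    rwa [Ne, ← finrank_zmod_eq_zero_iff, finrank_map_eq_of_disjoint_ker f hdisj,
      finrank_zmod_eq_zero_iff]
  rw [relIndex_eq_prime_iff (bracketSub_le N), ← finrank_map_eq_of_disjoint_ker f hdisj,
    ← finrank_map_eq_of_disjoint_ker f (hdisj.mono_left (bracketSub_le N)), map_bracketSub]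
  exact huni.finrank_bracketSub_add_one hfN

/-- Pick a fixed `x ∈ N_v` with `x i ≠ 0`. A nonzero kernel of the `i`-th projection on `N_v`
would contain a nonzero fixed vector, which spans the line `C_{N_v}(P)` and so forces `x i = 0`. -/
theorem exists_disjoint_span_ker_proj {ι : Type} [Finite ι] {v : ι → M}
    (hfix : finrank (ZMod p) ↥(fixedSubmodule ⊓ span R {v}) = 1) :
    ∃ i, Disjoint (span R {v}) (LinearMap.ker (LinearMap.proj i : (ι → M) →ₗ[R] M)) := by
  have hne : fixedSubmodule ⊓ span R {v} ≠ ⊥ := by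
    rw [Ne, ← finrank_zmod_eq_zero_iff, hfix]
    exact one_ne_zero
  obtain ⟨x, hx, hx0⟩ := exists_mem_ne_zero_of_ne_bot hne
  obtain ⟨i, hi⟩ := Function.ne_iff.mp hx0
  refine ⟨i, disjoint_iff.mpr (by_contra fun hK => hi ?_)⟩
  have hKfix := fixedSubmodule_inf_ne_bot hK (huni.iterate_bracketSub_pi_eq_bot _)
  have heq : fixedSubmodule ⊓ (span R {v} ⊓ LinearMap.ker (LinearMap.proj i)) =
      fixedSubmodule ⊓ span R {v} := by
    refine eq_of_le_of_finrank_zmod_le (inf_le_inf_left _ inf_le_left) ?_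
    rw [hfix, Nat.one_le_iff_ne_zero, Ne, finrank_zmod_eq_zero_iff]
    exact hKfix
  rw [← heq] at hx
  exact hx.2.2

variable [Nontrivial M]

theorem isCoatom_bracketSub_top : IsCoatom (bracketSub p P M ⊤) := by
  have hcodim := huni.finrank_bracketSub_add_one (top_ne_bot : (⊤ : Submodule R M) ≠ ⊥)
  refine ⟨fun h => by rw [h] at hcodim; omega, fun X hX => ?_⟩
  refine eq_of_le_of_finrank_zmod_le le_top ?_
  have := finrank_zmod_lt_finrank_of_lt hX
  omega

theorem le_bracketSub_top {N : Submodule R M} (hN : N ≠ ⊤) : N ≤ bracketSub p P M ⊤ := by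
  by_contra hle
  have hsup : N ⊔ bracketSub p P M ⊤ = ⊤ :=
    huni.isCoatom_bracketSub_top.lt_iff.mp (right_lt_sup.mpr hle)
  exact hN (top_le_iff.mp (le_of_le_sup_bracketSub huni.iterate_bracketSub_top_eq_bot hsup.ge))

theorem span_singleton_eq_top_iff {x : M} :
    span R {x} = ⊤ ↔ x ∉ bracketSub p P M ⊤ := by
  refine ⟨fun h hx => huni.isCoatom_bracketSub_top.1 (top_le_iff.mp ?_), fun hx => ?_⟩
  · exact h.ge.trans (span_le.mpr (Set.singleton_subset_iff.mpr hx))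
  · by_contra h
    exact hx (huni.le_bracketSub_top h (mem_span_singleton_self x))

theorem finrank_span_eq_iff_of_disjoint {ι : Type} {v : ι → M} {i : ι}
    (hdisj : Disjoint (span R {v}) (LinearMap.ker (LinearMap.proj i : (ι → M) →ₗ[R] M))) :
    finrank (ZMod p) (span R {v}) = finrank (ZMod p) M ↔ v i ∉ bracketSub p P M ⊤ := by
  rw [← finrank_map_eq_of_disjoint_ker _ hdisj, map_proj_span_singleton,
    finrank_zmod_eq_iff_eq_top, huni.span_singleton_eq_top_iff]

end UniserialFpP

theorem cyclic_submodule_uniserial_tfae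
    (hp : p.Prime)
    [Module.Finite (ZMod p) M] [Nontrivial M]
    (huni : UniserialFpP p P M)
    (n : ℕ) (v : Fin n → M) :
    (((∀ N' : Submodule (MonoidAlgebra (ZMod p) P) (Fin n → M), N' ≠ ⊥ →
        N' ≤ Submodule.span (MonoidAlgebra (ZMod p) P) {v} →
        (bracketSub p P (Fin n → M) N').toAddSubgroup.relIndex N'.toAddSubgroup = p) ∧
      Module.finrank (ZMod p)
        ((Submodule.span (MonoidAlgebra (ZMod p) P) {v}).restrictScalars (ZMod p))
        = Module.finrank (ZMod p) M) ↔
    (Module.finrank (ZMod p)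
        ((Submodule.span (MonoidAlgebra (ZMod p) P) {v}).restrictScalars (ZMod p))
        = Module.finrank (ZMod p) M ∧
      Module.finrank (ZMod p)
        ↥(fixedPts p P (Fin n → M) ⊓
          (Submodule.span (MonoidAlgebra (ZMod p) P) {v}).restrictScalars (ZMod p))
        = 1)) ∧
    ((Module.finrank (ZMod p)
        ((Submodule.span (MonoidAlgebra (ZMod p) P) {v}).restrictScalars (ZMod p))
        = Module.finrank (ZMod p) M ∧
      Module.finrank (ZMod p)
        ↥(fixedPts p P (Fin n → M) ⊓
          (Submodule.span (MonoidAlgebra (ZMod p) P) {v}).restrictScalars (ZMod p))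
        = 1) ↔
    (∃ i : Fin n,
      (∀ a : MonoidAlgebra (ZMod p) P, a • v i = 0 → a • v = 0) ∧
      v i ∉ bracketSub p P M (⊤ : Submodule (MonoidAlgebra (ZMod p) P) M))) := by
  have : Fact p.Prime := ⟨hp⟩
  set W := Submodule.span (MonoidAlgebra (ZMod p) P) {v}
  have h12 (hW : IsUniserialBelow W) (hdim : finrank (ZMod p) W = finrank (ZMod p) M) :
      finrank (ZMod p) ↥(fixedSubmodule ⊓ W) = 1 := by
    refine finrank_fixedSubmodule_inf_eq_one ?_ (huni.iterate_bracketSub_pi_eq_bot W) hW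
    rw [Ne, ← finrank_zmod_eq_zero_iff, hdim]
    exact finrank_pos.ne'
  have h23 (hdim : finrank (ZMod p) W = finrank (ZMod p) M)
      (hfix : finrank (ZMod p) ↥(fixedSubmodule ⊓ W) = 1) :
      ∃ i, (∀ a : MonoidAlgebra (ZMod p) P, a • v i = 0 → a • v = 0) ∧
        v i ∉ bracketSub p P M ⊤ := by
    obtain ⟨i, hdisj⟩ := huni.exists_disjoint_span_ker_proj hfix
    exact ⟨i, disjoint_span_ker_proj_iff.mp hdisj,
      (huni.finrank_span_eq_iff_of_disjoint hdisj).mp hdim⟩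
  have h31 : (∃ i, (∀ a : MonoidAlgebra (ZMod p) P, a • v i = 0 → a • v = 0) ∧
      v i ∉ bracketSub p P M ⊤) →
      IsUniserialBelow W ∧ finrank (ZMod p) W = finrank (ZMod p) M := by
    rintro ⟨i, hann, hv⟩
    have hdisj := disjoint_span_ker_proj_iff.mpr hann
    exact ⟨huni.isUniserialBelow_of_disjoint_ker _ hdisj,
      (huni.finrank_span_eq_iff_of_disjoint hdisj).mpr hv⟩
  exact ⟨⟨fun h => ⟨h.2, h12 h.1 h.2⟩, fun h => h31 (h23 h.1 h.2)⟩,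
    ⟨fun h => h23 h.1 h.2, fun h => ⟨(h31 h).2, h12 (h31 h).1 (h31 h).2⟩⟩⟩
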